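/- arXiv:2106.04091 — 2 statements merged into one kernel-verified Lean document; each statement's English description precedes it below -/
import Mathlib

section
/- Let A be a set of k ≥ 2 positive integers and let H be a set of r ≥ 2 positive integers with maximum element h_r. If |HA| = h_r(k−1) + r, then H is an arithmetic progression with some common difference d, and A is an arithmetic progression with common difference d·min(A). -/
/-!
Let `m = min A` and `n = max H`. The numbers `h * m` (`h ∈ H`, `h < n`) lie below `nA`, and
`|nA| ≥ n(k - 1) + 1` by Cauchy–Davenport, so the hypothesis forces `|nA| = n(k - 1) + 1` and
`HA = {h * m : h ∈ H, h < n} ∪ nA`.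

Write `nA = A + B` with `B = (n - 1)A` and let `b₀ < b₁` be the two smallest elements of `B`. The
sums `max A + b`, `b ∈ B \ {b₀, b₁}`, lie above `A + {b₀, b₁}`, so `|A + {b₀, b₁}| ≤ |A| + 1`:
every `x ∈ A` other than `max A` has `x + e ∈ A` for `e = b₁ - b₀`, and `A` is an arithmetic
progression with difference `e`.

For `h ∈ H` with `h < n`, the element `h * m + e ∈ hA` lies below `n * m + e`, the second smallest
element of `nA`, so it equals `h' * m` for some `h' ∈ H`. Taking `h = min H` gives `e = d * m`,
and then `h + d ∈ H` for every `h ∈ H` other than `n`, so `H` is an arithmetic progression with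
difference `d`.
-/

open Finset Pointwise

/-- `itSum h A` is the sumset `hA`: integers expressible as a sum of `h` elements
of `A` (repetitions allowed); `0A = {0}`. -/
def itSum : ℕ → Finset ℤ → Finset ℤ
  | 0, _ => {0}
  | n + 1, A => A + itSum n A

/-- `sumsetH H A = ⋃ h ∈ H, hA`. -/
def sumsetH (H : Finset ℕ) (A : Finset ℤ) : Finset ℤ :=
  H.biUnion fun h => itSum h A

/-- `rSum h A` is the restricted sumset `h^A`: integers expressible as a sum of `h`
pairwise distinct elements of `A`; `0^A = {0}`. -/
def rSum (h : ℕ) (A : Finset ℤ) : Finset ℤ :=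
  (A.powersetCard h).image fun B => B.sum id

/-- `rSumH H A = ⋃ h ∈ H, h^A`. -/
def rSumH (H : Finset ℕ) (A : Finset ℤ) : Finset ℤ :=
  H.biUnion fun h => rSum h A

/-- A finite set of naturals is an arithmetic progression with common difference `d`. -/
def IsAPNat (S : Finset ℕ) (d : ℕ) : Prop :=
  ∃ a : ℕ, S = (Finset.range S.card).image fun i => a + i * d

/-- A finite set of integers is an arithmetic progression with common difference `d`. -/
def IsAPInt (S : Finset ℤ) (d : ℤ) : Prop :=
  ∃ a : ℤ, S = (Finset.range S.card).image fun i : ℕ => a + (i : ℤ) * d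

section OrderedMonoid

variable {α : Type*} [AddCommMonoid α] [LinearOrder α] [IsOrderedCancelAddMonoid α]

theorem Finset.eq_image_range_of_add_mem {d : α} (hd : 0 < d) (S : Finset α) (hS : S.Nonempty)
    (hstep : ∀ x ∈ S, x ≠ S.max' hS → x + d ∈ S) :
    S = (range #S).image fun i => S.min' hS + i • d := by
  classical
  induction S using Finset.induction_on_max with
  | empty => simp at hS
  | insert a s has ih =>
    rcases s.eq_empty_or_nonempty with rfl | hs
    · simp
    have ha : a ∉ s := fun h => (has a h).false
    have hmax : (insert a s).max' hS = a := by
      rw [max'_insert a s hs, max_eq_left (has _ (s.max'_mem hs)).le]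
    have hmin : (insert a s).min' hS = s.min' hs := by
      rw [min'_insert a s hs, min_eq_right (has _ (s.min'_mem hs)).le]
    rw [hmax] at hstep
    rw [hmin, card_insert_of_notMem ha]
    have htop : s.max' hs + d = a := by
      have h := hstep _ (mem_insert_of_mem (s.max'_mem hs)) (has _ (s.max'_mem hs)).ne
      rcases mem_insert.mp h with h | h
      · exact h
      · exact absurd (s.le_max' _ h) (not_le.mpr (lt_add_of_pos_right _ hd))
    have hs_eq := ih hs fun x hx hxmax => by
      have h := hstep x (mem_insert_of_mem hx) (has x hx).ne
      rcases mem_insert.mp h with h | h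
      · exact absurd (add_right_cancel (h.trans htop.symm)) hxmax
      · exact h
    obtain ⟨j, hj, hjmax⟩ : ∃ j ∈ range #s, s.min' hs + j • d = s.max' hs := by
      rw [← mem_image, ← hs_eq]
      exact s.max'_mem hs
    have hjs : j + 1 = #s := by
      by_contra hne
      refine ha ?_
      rw [hs_eq]
      refine mem_image.mpr ⟨j + 1, ?_, ?_⟩
      · rw [mem_range] at hj ⊢
        omega
      · rw [← htop, ← hjmax, succ_nsmul, add_assoc]
    rw [range_add_one, image_insert, ← hs_eq, ← hjs, succ_nsmul, ← add_assoc, hjmax, htop]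

theorem Finset.eq_or_add_le_of_mem_image_range {a d x : α} (hd : 0 ≤ d) {n : ℕ}
    (hx : x ∈ (range n).image fun i => a + i • d) : x = a ∨ a + d ≤ x := by
  obtain ⟨i, -, rfl⟩ := mem_image.mp hx
  rcases i with _ | i
  · simp
  · right
    simpa using add_le_add_left (nsmul_le_nsmul_left hd (Nat.le_add_left 1 i)) a

end OrderedMonoid

section Sumsets

variable {A : Finset ℤ} {H : Finset ℕ} {m e x : ℤ} {n : ℕ}

theorem itSum_succ (h : ℕ) : itSum (h + 1) A = A + itSum h A := rfl

theorem itSum_nonempty (hA : A.Nonempty) : ∀ h, (itSum h A).Nonempty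
  | 0 => singleton_nonempty 0
  | h + 1 => hA.add (itSum_nonempty hA h)

theorem natCast_mul_mem_itSum (hm : m ∈ A) : ∀ h : ℕ, (h : ℤ) * m ∈ itSum h A
  | 0 => by simp [itSum]
  | h + 1 => by
    rw [itSum_succ, Nat.cast_succ, add_one_mul, add_comm _ m]
    exact add_mem_add hm (natCast_mul_mem_itSum hm h)

theorem mul_le_of_mem_itSum (hA : ∀ a ∈ A, m ≤ a) {h : ℕ} (hx : x ∈ itSum h A) : h * m ≤ x := by
  induction h generalizing x with
  | zero => simp_all [itSum]
  | succ h ih =>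
    obtain ⟨a, ha, y, hy, rfl⟩ := mem_add.mp hx
    push_cast
    linarith [hA a ha, ih hy]

theorem eq_or_add_le_of_mem_itSum (he : 0 ≤ e) (hA : ∀ a ∈ A, a = m ∨ m + e ≤ a)
    {h : ℕ} (hx : x ∈ itSum h A) : x = h * m ∨ h * m + e ≤ x := by
  induction h generalizing x with
  | zero => simp_all [itSum]
  | succ h ih =>
    obtain ⟨a, ha, y, hy, rfl⟩ := mem_add.mp hx
    push_cast
    rcases hA a ha with rfl | ha' <;> rcases ih hy with rfl | hy'
    · left; ring
    all_goals right; linarith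

theorem le_card_itSum (hA : A.Nonempty) : ∀ h, h * (#A - 1) + 1 ≤ #(itSum h A)
  | 0 => by simp [itSum]
  | h + 1 => by
    have hcd := cauchy_davenport_add_of_linearOrder_isCancelAdd hA (itSum_nonempty hA h)
    have ih := le_card_itSum hA h
    have hk := hA.card_pos
    rw [itSum_succ, add_one_mul]
    omega

theorem add_mem_of_card_add_pair_le (hA : A.Nonempty) {b₀ b₁ : ℤ} (hb : b₀ < b₁)
    (hcard : #(A + {b₀, b₁}) ≤ #A + 1) : ∀ x ∈ A, x ≠ A.max' hA → x + (b₁ - b₀) ∈ A := by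
  set F := A.filter fun x => x + (b₁ - b₀) ∉ A
  have hdisj : Disjoint (A + {b₀}) (F + {b₁}) := by
    simp only [disjoint_left, mem_add, mem_singleton, mem_filter, F]
    rintro _ ⟨a, ha, _, rfl, rfl⟩ ⟨f, ⟨-, hf⟩, _, rfl, hfa⟩
    exact hf (by convert ha using 1; linarith)
  have hsub : (A + {b₀}) ∪ (F + {b₁}) ⊆ A + {b₀, b₁} :=
    union_subset (add_subset_add_left (by simp)) (add_subset_add (filter_subset _ _) (by simp))
  have hF : #F ≤ 1 := by
    have := card_le_card hsub
    rw [card_union_of_disjoint hdisj, card_add_singleton, card_add_singleton] at this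
    omega
  have hmaxF : A.max' hA ∈ F :=
    mem_filter.mpr ⟨max'_mem _ _, fun h => (A.le_max' _ h).not_gt (by linarith)⟩
  intro x hx hxmax
  by_contra hxF
  exact hxmax (card_le_one.mp hF x (mem_filter.mpr ⟨hx, hxF⟩) _ hmaxF)

theorem exists_add_mem_of_card_add_le {B : Finset ℤ} (hA : A.Nonempty) (hB : 2 ≤ #B)
    (hAB : #(A + B) + 1 ≤ #A + #B) : ∃ e > 0, ∀ x ∈ A, x ≠ A.max' hA → x + e ∈ A := by
  have hB₀ : B.Nonempty := card_pos.mp (by omega)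
  set b₀ := B.min' hB₀
  have hB₁ : (B.erase b₀).Nonempty :=
    card_pos.mp (by rw [card_erase_of_mem (min'_mem _ _)]; omega)
  set b₁ := (B.erase b₀).min' hB₁
  have hb₁ : b₁ ∈ B.erase b₀ := min'_mem _ _
  have hb : b₀ < b₁ :=
    (B.min'_le _ (mem_of_mem_erase hb₁)).lt_of_ne (ne_of_mem_erase hb₁).symm
  set C := (B.erase b₀).erase b₁
  refine ⟨b₁ - b₀, sub_pos.mpr hb, add_mem_of_card_add_pair_le hA hb ?_⟩
  have hdisj : Disjoint (A + {b₀, b₁}) ({A.max' hA} + C) := by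
    rw [disjoint_left]
    rintro _ hx hy
    obtain ⟨a, ha, b, hb', rfl⟩ := mem_add.mp hx
    obtain ⟨_, hM, c, hc, hac⟩ := mem_add.mp hy
    rw [mem_singleton] at hM
    subst hM
    have hbc : b₁ < c := ((B.erase b₀).min'_le _ (mem_of_mem_erase hc)).lt_of_ne
      (ne_of_mem_erase hc).symm
    have hbb : b ≤ b₁ := by
      rcases mem_insert.mp hb' with rfl | hb' <;> [exact hb.le; exact (mem_singleton.mp hb').le]
    linarith [A.le_max' a ha]
  have hsub : (A + {b₀, b₁}) ∪ ({A.max' hA} + C) ⊆ A + B :=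
    union_subset (add_subset_add_left (insert_subset (min'_mem _ _)
      (singleton_subset_iff.mpr (mem_of_mem_erase hb₁))))
      (add_subset_add (singleton_subset_iff.mpr (max'_mem _ _))
        ((erase_subset _ _).trans (erase_subset _ _)))
  have := card_le_card hsub
  rw [card_union_of_disjoint hdisj, card_singleton_add, card_erase_of_mem hb₁,
    card_erase_of_mem (min'_mem _ _)] at this
  omega

theorem exists_add_mem_of_card_itSum_le (hA : 2 ≤ #A) {h : ℕ} (hh : 2 ≤ h)
    (hcard : #(itSum h A) ≤ h * (#A - 1) + 1) :
    ∃ e > 0, ∀ x ∈ A, x ≠ A.max' (card_pos.mp (by omega)) → x + e ∈ A := by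
  obtain ⟨h, rfl⟩ : ∃ h', h = h' + 1 := ⟨h - 1, by omega⟩
  have hB := le_card_itSum (A := A) (card_pos.mp (by omega)) h
  have hpos : 0 < h * (#A - 1) := Nat.mul_pos (by omega) (by omega)
  refine exists_add_mem_of_card_add_le (B := itSum h A) _ (by omega) ?_
  rw [← itSum_succ]
  rw [add_one_mul] at hcard
  omega

theorem union_image_mul_itSum_subset (hmA : m ∈ A) (hnH : n ∈ H) :
    (H.erase n).image (fun h : ℕ => (h : ℤ) * m) ∪ itSum n A ⊆ sumsetH H A := by
  refine union_subset (fun x hx => ?_) fun x hx => mem_biUnion.mpr ⟨n, hnH, hx⟩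
  obtain ⟨h, hh, rfl⟩ := mem_image.mp hx
  exact mem_biUnion.mpr ⟨h, mem_of_mem_erase hh, natCast_mul_mem_itSum hmA h⟩

theorem card_union_image_mul_itSum (hm : 0 < m) (hAm : ∀ a ∈ A, m ≤ a) (hnH : n ∈ H)
    (hHn : ∀ h ∈ H, h ≤ n) :
    #((H.erase n).image (fun h : ℕ => (h : ℤ) * m) ∪ itSum n A) = #H - 1 + #(itSum n A) := by
  have hinj : Function.Injective fun h : ℕ => (h : ℤ) * m := fun a b hab => by
    exact_mod_cast mul_right_cancel₀ hm.ne' hab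
  rw [card_union_of_disjoint, card_image_of_injective _ hinj, card_erase_of_mem hnH]
  rw [disjoint_left]
  rintro _ hx hy
  obtain ⟨h, hh, rfl⟩ := mem_image.mp hx
  have hhn : h < n := (hHn h (mem_of_mem_erase hh)).lt_of_ne (ne_of_mem_erase hh)
  have : (h : ℤ) * m < n * m := mul_lt_mul_of_pos_right (by exact_mod_cast hhn) hm
  linarith [mul_le_of_mem_itSum hAm hy]

theorem exists_mem_mul_eq_mul_add (hm : 0 < m) (he : 0 < e) (hmA : m ∈ A) (hmeA : m + e ∈ A)
    (hAe : ∀ a ∈ A, a = m ∨ m + e ≤ a) (hnH : n ∈ H)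
    (hHA : sumsetH H A = (H.erase n).image (fun h : ℕ => (h : ℤ) * m) ∪ itSum n A)
    {h : ℕ} (hh : h ∈ H) (h0 : 0 < h) (hhn : h < n) : ∃ h' ∈ H, (h : ℤ) * m + e = h' * m := by
  obtain ⟨g, rfl⟩ : ∃ g, h = g + 1 := ⟨h - 1, by omega⟩
  have hx : ((g + 1 : ℕ) : ℤ) * m + e ∈ sumsetH H A := by
    refine mem_biUnion.mpr ⟨g + 1, hh, ?_⟩
    rw [itSum_succ]
    convert add_mem_add hmeA (natCast_mul_mem_itSum hmA g) using 1
    push_cast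
    ring
  rcases mem_union.mp (hHA ▸ hx) with hx | hx
  · obtain ⟨h', hh', hx⟩ := mem_image.mp hx
    exact ⟨h', mem_of_mem_erase hh', hx.symm⟩
  · refine ⟨n, hnH, ?_⟩
    have : ((g + 1 : ℕ) : ℤ) * m < n * m := mul_lt_mul_of_pos_right (by exact_mod_cast hhn) hm
    rcases eq_or_add_le_of_mem_itSum he.le hAe hx with hx | hx
    · exact hx
    · linarith

theorem exists_add_mem_of_forall_exists_mul_eq_add {h₀ : ℕ} (hm : 0 < m) (he : 0 < e)
    (h₀H : h₀ ∈ H) (h₀n : h₀ ≠ n)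
    (hstep : ∀ h ∈ H, h ≠ n → ∃ h' ∈ H, (h : ℤ) * m + e = h' * m) :
    ∃ d : ℕ, 0 < d ∧ e = d * m ∧ ∀ h ∈ H, h ≠ n → h + d ∈ H := by
  obtain ⟨h₁, -, h₁e⟩ := hstep h₀ h₀H h₀n
  have hlt : h₀ < h₁ := by
    exact_mod_cast lt_of_mul_lt_mul_right (by linarith : (h₀ : ℤ) * m < h₁ * m) hm.le
  refine ⟨h₁ - h₀, by omega, by rw [Nat.cast_sub hlt.le, sub_mul]; linarith, ?_⟩
  intro h hh hn
  obtain ⟨h', hh', h'e⟩ := hstep h hh hn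
  have : (h' : ℤ) = h + h₁ - h₀ := mul_right_cancel₀ hm.ne' (by linear_combination h₁e - h'e)
  convert hh'
  omega

end Sumsets

theorem sumset_card_inverse (k r : ℕ) (hk2 : 2 ≤ k) (hr2 : 2 ≤ r)
    (A : Finset ℤ) (H : Finset ℕ)
    (hApos : ∀ a ∈ A, 0 < a) (hHpos : ∀ h ∈ H, 0 < h)
    (hk : A.card = k) (hrcard : H.card = r)
    (heq : (sumsetH H A).card
      = H.max' (Finset.card_pos.mp (by omega)) * (k - 1) + r) :
    ∃ d : ℕ, IsAPNat H d ∧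
      IsAPInt A ((d : ℤ) * A.min' (Finset.card_pos.mp (by omega))) := by
  subst hk hrcard
  have hA : A.Nonempty := card_pos.mp (by omega)
  have hH : H.Nonempty := card_pos.mp (by omega)
  set m := A.min' hA
  set n := H.max' hH
  have hmA : m ∈ A := min'_mem A hA
  have hnH : n ∈ H := max'_mem H hH
  have hm : 0 < m := hApos m hmA
  have hH₀ : H.min' hH < n := min'_lt_max'_of_card H (by omega)
  have hn : 2 ≤ n := by have := hHpos _ (min'_mem H hH); omega
  have hsub := union_image_mul_itSum_subset hmA hnH
  have hU := card_union_image_mul_itSum hm (fun a => min'_le A a) hnH (le_max' H)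
  have hlow := le_card_itSum hA n
  have hle := card_le_card hsub
  have hHA := (eq_of_subset_of_card_le hsub (by omega)).symm
  obtain ⟨e, he, hAe⟩ := exists_add_mem_of_card_itSum_le (by omega : 2 ≤ #A) hn (by omega)
  have hAap := eq_image_range_of_add_mem he A hA hAe
  have hmeA : m + e ∈ A := hAe m hmA (min'_lt_max'_of_card A (by omega)).ne
  have hAe' : ∀ a ∈ A, a = m ∨ m + e ≤ a := fun a ha =>
    eq_or_add_le_of_mem_image_range he.le (by rwa [hAap] at ha)
  obtain ⟨d, hd, rfl, hHd⟩ := exists_add_mem_of_forall_exists_mul_eq_add hm he (min'_mem H hH)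
    hH₀.ne fun h hh hhn => exists_mem_mul_eq_mul_add hm he hmA hmeA hAe' hnH hHA hh (hHpos h hh)
      ((le_max' H h hh).lt_of_ne hhn)
  refine ⟨d, ⟨_, by simpa only [smul_eq_mul] using eq_image_range_of_add_mem hd H hH hHd⟩, m, ?_⟩
  simpa only [nsmul_eq_mul] using hAap
end

section
/- For positive integers r ≤ k−1, if A = {0, 1, …, k−1} and H = {1, 2, …, r}, then |H^A| = Σ_{i=1}^{r}(h_i − h_{i−1})(k − h_i − 1) + h_1 + r = rk − r(r+1)/2 + 1; in particular the lower bound of the previous result is attained. -/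
open Finset Pointwise

lemma gaussZ (h : ℕ) : 2 * (∑ i ∈ Finset.range h, (i:ℤ)) = h * (h - 1) := by
  induction h with
  | zero => simp
  | succ n ih =>
    rw [Finset.sum_range_succ]
    push_cast
    push_cast at ih
    linarith

lemma S_nonneg (h : ℕ) : 0 ≤ ∑ i ∈ Finset.range h, (i:ℤ) :=
  Finset.sum_nonneg fun i _ => by positivity

lemma sum_bounds : ∀ (h : ℕ) (m : ℤ) (B : Finset ℤ), B ⊆ Finset.Icc 0 m → B.card = h →
    (∑ i ∈ Finset.range h, (i:ℤ)) ≤ B.sum id ∧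
      B.sum id ≤ h * m - ∑ i ∈ Finset.range h, (i:ℤ) := by
  intro h
  induction h with
  | zero =>
    intro m B _ hc
    rw [Finset.card_eq_zero] at hc
    subst hc; simp
  | succ n ih =>
    intro m B hB hc
    have hne : B.Nonempty := Finset.card_pos.mp (by omega)
    set a := B.max' hne with ha
    have haB : a ∈ B := B.max'_mem hne
    have ham : a ≤ m := (Finset.mem_Icc.mp (hB haB)).2
    have ha0 : 0 ≤ a := (Finset.mem_Icc.mp (hB haB)).1
    have hB' : B.erase a ⊆ Finset.Icc 0 (a - 1) := by
      intro x hx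
      have hxB := Finset.mem_of_mem_erase hx
      have hxa : x ≤ a := Finset.le_max' B x hxB
      have hxne : x ≠ a := Finset.ne_of_mem_erase hx
      exact Finset.mem_Icc.mpr ⟨(Finset.mem_Icc.mp (hB hxB)).1, by omega⟩
    have hc' : (B.erase a).card = n := by
      rw [Finset.card_erase_of_mem haB, hc]; rfl
    have hBa : B ⊆ Finset.Icc 0 a := fun x hx =>
      Finset.mem_Icc.mpr ⟨(Finset.mem_Icc.mp (hB hx)).1, Finset.le_max' B x hx⟩
    have hcard_le : B.card ≤ (Finset.Icc (0:ℤ) a).card := Finset.card_le_card hBa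
    rw [hc, Int.card_Icc] at hcard_le
    have hna : (n : ℤ) ≤ a := by omega
    obtain ⟨ih1, ih2⟩ := ih (a - 1) (B.erase a) hB' hc'
    have hsum : B.sum id = a + (B.erase a).sum id :=
      (Finset.add_sum_erase B id haB).symm
    rw [Finset.sum_range_succ, hsum]
    push_cast
    constructor
    · linarith
    · have : (n:ℤ) * (a - 1) ≤ n * (m - 1) := by
        have : (0:ℤ) ≤ n := Int.natCast_nonneg n
        nlinarith
      linarith

lemma exists_subset : ∀ (h : ℕ) (m n : ℤ),
    (∑ i ∈ Finset.range h, (i:ℤ)) ≤ n → n ≤ h * m - ∑ i ∈ Finset.range h, (i:ℤ) →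
    ∃ B : Finset ℤ, B ⊆ Finset.Icc 0 m ∧ B.card = h ∧ B.sum id = n := by
  intro h
  induction h with
  | zero =>
    intro m n h1 h2
    refine ⟨∅, by simp, by simp, ?_⟩
    simp only [Finset.sum_empty]
    simp at h1 h2
    omega
  | succ q ih =>
    intro m n h1 h2
    have hS := S_nonneg q
    have hg := gaussZ q
    rw [Finset.sum_range_succ] at h1 h2
    set S := ∑ i ∈ Finset.range q, (i:ℤ) with hSdef
    have hq0 : (0:ℤ) ≤ q := Int.natCast_nonneg q
    have hm : (q:ℤ) ≤ m := by push_cast at h2; nlinarith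
    set a := min m (n - S) with hadef
    have ha0 : 0 ≤ a := by
      rcases le_total m (n - S) with hc | hc
      · simp [hadef, min_eq_left hc]; omega
      · simp [hadef, min_eq_right hc]; omega
    have ham : a ≤ m := min_le_left _ _
    have hlow : S ≤ n - a ∧ n - a ≤ q * (a - 1) - S := by
      rcases le_total m (n - S) with hc | hc
      · rw [hadef, min_eq_left hc]
        constructor
        · omega
        · push_cast at h2 ⊢
          nlinarith
      · rw [hadef, min_eq_right hc]
        constructor
        · omega
        · have haq : (q:ℤ) ≤ n - S := by omega
          nlinarith
    obtain ⟨B', hB'sub, hB'card, hB'sum⟩ := ih (a - 1) (n - a) hlow.1 hlow.2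
    have haB' : a ∉ B' := by
      intro hmem
      have := (Finset.mem_Icc.mp (hB'sub hmem)).2
      omega
    refine ⟨insert a B', ?_, ?_, ?_⟩
    · intro x hx
      rcases Finset.mem_insert.mp hx with rfl | hx'
      · exact Finset.mem_Icc.mpr ⟨ha0, ham⟩
      · have := Finset.mem_Icc.mp (hB'sub hx')
        exact Finset.mem_Icc.mpr ⟨this.1, by omega⟩
    · rw [Finset.card_insert_of_notMem haB', hB'card]
    · rw [Finset.sum_insert haB', hB'sum]; simp

lemma rSum_Icc (h : ℕ) (m : ℤ) :
    rSum h (Finset.Icc 0 m) =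
      Finset.Icc (∑ i ∈ Finset.range h, (i:ℤ)) (h * m - ∑ i ∈ Finset.range h, (i:ℤ)) := by
  ext n
  simp only [rSum, Finset.mem_image, Finset.mem_powersetCard, Finset.mem_Icc]
  constructor
  · rintro ⟨B, ⟨hBsub, hBcard⟩, rfl⟩
    exact sum_bounds h m B hBsub hBcard
  · rintro ⟨h1, h2⟩
    obtain ⟨B, hs, hc, hsum⟩ := exists_subset h m n h1 h2
    exact ⟨B, ⟨hs, hc⟩, hsum⟩

lemma main_union (m : ℤ) : ∀ r : ℕ, 1 ≤ r → (r:ℤ) ≤ m →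
    rSumH (Finset.Icc 1 r) (Finset.Icc 0 m) =
      Finset.Icc 0 (r * m - ∑ i ∈ Finset.range r, (i:ℤ)) := by
  intro r
  induction r with
  | zero => intro h; omega
  | succ q ih =>
    intro _ hm
    rcases Nat.eq_or_lt_of_le (Nat.one_le_iff_ne_zero.mpr (by omega) : 1 ≤ q + 1) with hq | hq
    · -- q = 0
      have hq0 : q = 0 := by omega
      subst hq0
      rw [rSumH]
      rw [show Finset.Icc 1 1 = {1} from rfl]
      rw [Finset.singleton_biUnion, rSum_Icc]
      norm_num
    · have hq1 : 1 ≤ q := by omega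
      have hqm : (q:ℤ) ≤ m := by push_cast at hm ⊢; omega
      have hicc : Finset.Icc 1 (q+1) = insert (q+1) (Finset.Icc 1 q) := by
        ext x; simp [Finset.mem_Icc, Finset.mem_insert]; omega
      rw [rSumH, hicc, Finset.biUnion_insert, ← rSumH, ih hq1 hqm, rSum_Icc]
      have hg := gaussZ q
      have hS := S_nonneg q
      rw [Finset.sum_range_succ]
      set S := ∑ i ∈ Finset.range q, (i:ℤ)
      have hq0 : (1:ℤ) ≤ q := by exact_mod_cast hq1
      have key1 : 0 ≤ S + q := by positivity
      have key2 : S + (q:ℤ) ≤ q * m - S + 1 := by nlinarith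
      have key3 : (q:ℤ) * m - S ≤ (q+1) * m - (S + q) := by nlinarith
      ext x
      simp only [Finset.mem_union, Finset.mem_Icc]
      push_cast
      constructor
      · rintro (⟨hx1, hx2⟩ | ⟨hx1, hx2⟩)
        · constructor <;> linarith
        · constructor <;> linarith
      · rintro ⟨hx1, hx2⟩
        by_cases hc : x ≤ (q:ℤ) * m - S
        · right; exact ⟨hx1, hc⟩
        · left; constructor <;> linarith

lemma sum_Icc_id (r : ℕ) : ∑ i ∈ Finset.Icc 1 r, (i:ℤ) = (∑ i ∈ Finset.range r, (i:ℤ)) + r := by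
  induction r with
  | zero => simp
  | succ q ih =>
    have h : Finset.Icc 1 (q+1) = insert (q+1) (Finset.Icc 1 q) := by
      ext x; simp [Finset.mem_Icc, Finset.mem_insert]; omega
    rw [h, Finset.sum_insert (by simp), ih, Finset.sum_range_succ]
    push_cast; ring

theorem restricted_sumset_card_lower_bound_zero_mem_optimal (k r : ℕ)
    (hr : 0 < r) (hrk : r ≤ k - 1) :
    (rSumH (Finset.Icc 1 r) (Finset.Icc (0 : ℤ) ((k : ℤ) - 1))).card
      = (∑ i ∈ Finset.Icc 1 r, (k - i - 1)) + 1 + r ∧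
    (rSumH (Finset.Icc 1 r) (Finset.Icc (0 : ℤ) ((k : ℤ) - 1))).card
      = r * k - r * (r + 1) / 2 + 1 := by
  have hk : r + 1 ≤ k := by omega
  have hrZ : (1:ℤ) ≤ r := by exact_mod_cast hr
  have hkZ : (r:ℤ) + 1 ≤ k := by exact_mod_cast hk
  have hmain := main_union ((k:ℤ) - 1) r hr (by linarith)
  have hg := gaussZ r
  have hS := S_nonneg r
  set S := ∑ i ∈ Finset.range r, (i:ℤ) with hSdef
  have hnn : 0 ≤ (r:ℤ) * ((k:ℤ) - 1) - S + 1 := by nlinarith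
  have hcast : ((rSumH (Finset.Icc 1 r) (Finset.Icc (0 : ℤ) ((k : ℤ) - 1))).card : ℤ)
      = (r:ℤ) * ((k:ℤ) - 1) - S + 1 := by
    rw [hmain, Int.card_Icc]
    rw [show (r:ℤ) * ((k:ℤ) - 1) - S + 1 - 0 = (r:ℤ) * ((k:ℤ) - 1) - S + 1 by ring]
    exact Int.toNat_of_nonneg hnn
  have hterm : ∀ i ∈ Finset.Icc 1 r, ((k - i - 1 : ℕ) : ℤ) = (k:ℤ) - i - 1 := by
    intro i hi
    simp only [Finset.mem_Icc] at hi
    have : i + 1 ≤ k := by omega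
    omega
  have hSig : ((∑ i ∈ Finset.Icc 1 r, (k - i - 1) : ℕ) : ℤ)
      = (r:ℤ) * ((k:ℤ) - 1) - (S + r) := by
    rw [Nat.cast_sum, Finset.sum_congr rfl hterm]
    have : ∑ i ∈ Finset.Icc 1 r, ((k:ℤ) - i - 1)
        = (∑ i ∈ Finset.Icc 1 r, ((k:ℤ) - 1)) - ∑ i ∈ Finset.Icc 1 r, (i:ℤ) := by
      rw [← Finset.sum_sub_distrib]
      exact Finset.sum_congr rfl fun x _ => by ring
    rw [this, Finset.sum_const, Nat.card_Icc, sum_Icc_id]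
    push_cast; ring
  constructor
  · have : ((rSumH (Finset.Icc 1 r) (Finset.Icc (0 : ℤ) ((k : ℤ) - 1))).card : ℤ)
        = ((∑ i ∈ Finset.Icc 1 r, (k - i - 1) : ℕ) : ℤ) + 1 + r := by
      rw [hcast, hSig]; ring
    exact_mod_cast this
  · have h2cardZ : 2 * ((rSumH (Finset.Icc 1 r) (Finset.Icc (0 : ℤ) ((k : ℤ) - 1))).card : ℤ)
        = 2 * ((r * k : ℕ) : ℤ) - ((r * (r + 1) : ℕ) : ℤ) + 2 := by
      rw [hcast]; push_cast; nlinarith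
    have ht : r * (r + 1) / 2 * 2 = r * (r + 1) :=
      Nat.div_mul_cancel (Nat.even_mul_succ_self r).two_dvd
    have hab : r * (r + 1) ≤ 2 * (r * k) := by
      calc r * (r + 1) ≤ r * k := Nat.mul_le_mul_left r hk
        _ ≤ 2 * (r * k) := by omega
    set a := r * k
    set b := r * (r + 1)
    set t := b / 2
    omega
end
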